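/- arXiv:0805.2014 — 2 statements merged into one kernel-verified Lean document; each statement's English description precedes it below -/
import Mathlib

section
/- Let ω = (−1 + i√3)/2 and let Q be an n×n cube root Seidel matrix in standard form satisfying Q² = (n−1)·I + μ·Q for a real number μ. Suppose i ≠ j are indices (both different from the first) with Q_{ij} = ω. With the path counts N_{x,y} := #{k : Q_{ik} = x and Q_{kj} = y} for x, y ∈ {1, ω, ω²}, and writing α = N_{ω,ω²}, β = N_{ω,ω}, γ = N_{ω,1}, a = N_{ω²,ω²}, b = N_{ω²,ω}, c = N_{ω²,1}, A = N_{1,ω²}, B = N_{1,ω}, C = N_{1,1}, the following equations hold (as equalities of real numbers): α − B = −(2μ+1)/3; β − C = −(2μ+4)/3; γ + B + C = n/3 + μ; a − C = −(μ+2)/3; b + B + C = (n + μ − 1)/3; c − B = (1 − μ)/3; A + B + C = (n + 2μ + 1)/3. -/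
/-- `ω = (−1 + i√3)/2`, a primitive cube root of unity. -/
noncomputable def ω3 : ℂ := (-1 + Complex.I * Real.sqrt 3) / 2

/-- A cube root Seidel matrix: self-adjoint, zero diagonal, off-diagonal
entries among the cube roots of unity. -/
def IsCubeRootSeidel {n : ℕ} (Q : Matrix (Fin n) (Fin n) ℂ) : Prop :=
  Q.IsHermitian ∧ (∀ i, Q i i = 0) ∧
    ∀ i j, i ≠ j → Q i j = 1 ∨ Q i j = ω3 ∨ Q i j = ω3 ^ 2

/-- Standard form: every off-diagonal entry in the first row and first column
equals 1. -/
def IsStandardForm {n : ℕ} (Q : Matrix (Fin n) (Fin n) ℂ) : Prop :=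
  ∀ i j : Fin n, i ≠ j → (i.val = 0 ∨ j.val = 0) → Q i j = 1

/-- The path count `N_{x,y}(i,j) = #{k : Q_{ik} = x and Q_{kj} = y}`,
regarded as a real number. -/
noncomputable def pathCount {n : ℕ} (Q : Matrix (Fin n) (Fin n) ℂ)
    (i j : Fin n) (x y : ℂ) : ℝ :=
  (Nat.card {k : Fin n // Q i k = x ∧ Q k j = y} : ℝ)

/-! Entries `(i,0)`, `(0,j)` and `(i,j)` of `Q² = (n-1)I + μQ` give, thanks to the standard form,
`∑ₖ Q i k = ∑ₖ Q k j = μ + 1` and `∑ₖ Q i k * Q k j = μω`. Grouping the indices `k ≠ i, j` by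
the pair `(Q i k, Q k j)` turns these sums, and the number `n - 2` of such `k`, into combinations
of the nine path counts with coefficients in `{1, ω, ω²}`. As `p + qω + rω² = 0` with `p, q, r`
real forces `p = q = r`, this gives seven real linear equations, which are the claim. -/

open Finset

lemma ω3_re : ω3.re = -1 / 2 := by simp [ω3]

lemma ω3_im : ω3.im = √3 / 2 := by simp [ω3]

lemma ω3_sq_add_ω3_add_one : ω3 ^ 2 + ω3 + 1 = 0 := by
  have h3 : ((√3 : ℝ) : ℂ) ^ 2 = 3 := by
    rw [← Complex.ofReal_pow, Real.sq_sqrt] <;> norm_num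
  unfold ω3
  linear_combination Complex.I ^ 2 / 4 * h3 + 3 / 4 * Complex.I_sq

lemma ω3_pow_three : ω3 ^ 3 = 1 := by
  linear_combination (ω3 - 1) * ω3_sq_add_ω3_add_one

lemma ω3_sq_im : (ω3 ^ 2).im = -(√3 / 2) := by
  rw [show ω3 ^ 2 = -ω3 - 1 by linear_combination ω3_sq_add_ω3_add_one]
  simp [ω3_im]

lemma eq_of_ofReal_add_mul_ω3_add_mul_ω3_sq_eq_zero {p q r : ℝ}
    (h : (p : ℂ) + q * ω3 + r * ω3 ^ 2 = 0) : p = r ∧ q = r := by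
  have h' : ((p - r : ℝ) : ℂ) + (q - r : ℝ) * ω3 = 0 := by
    push_cast; linear_combination h - r * ω3_sq_add_ω3_add_one
  have him : (q - r) * (√3 / 2) = 0 := by simpa [ω3_re, ω3_im] using congrArg Complex.im h'
  have hre : p - r + (q - r) * (-1 / 2) = 0 := by
    simpa [ω3_re, ω3_im] using congrArg Complex.re h'
  have hqr : q = r := by simpa [sub_eq_zero] using him
  constructor <;> linarith

lemma ω3_ne_zero : ω3 ≠ 0 := fun h => by
  have h3 : 0 < √3 := by positivity
  have := ω3_im
  rw [h, Complex.zero_im] at this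
  linarith

noncomputable def cubeRootsOfUnity : Finset ℂ := {1, ω3, ω3 ^ 2}

lemma zero_notMem_cubeRootsOfUnity : (0 : ℂ) ∉ cubeRootsOfUnity := by
  simp [cubeRootsOfUnity, ω3_ne_zero.symm, (pow_ne_zero 2 ω3_ne_zero).symm]

lemma sum_cubeRootsOfUnity {M : Type*} [AddCommMonoid M] (g : ℂ → M) :
    ∑ x ∈ cubeRootsOfUnity, g x = g 1 + g ω3 + g (ω3 ^ 2) := by
  have h3 : 0 < √3 := by positivity
  have h1 : (1 : ℂ) ≠ ω3 := fun h => by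
    have := congrArg Complex.im h
    rw [ω3_im, Complex.one_im] at this
    linarith
  have h2 : (1 : ℂ) ≠ ω3 ^ 2 := fun h => by
    have := congrArg Complex.im h
    rw [ω3_sq_im, Complex.one_im] at this
    linarith
  have h12 : ω3 ≠ ω3 ^ 2 := fun h => by
    have := congrArg Complex.im h
    rw [ω3_im, ω3_sq_im] at this
    linarith
  rw [cubeRootsOfUnity, sum_insert (by simp [h1, h2]), sum_pair h12, add_assoc]

lemma IsCubeRootSeidel.apply_mem_cubeRootsOfUnity {n : ℕ} {Q : Matrix (Fin n) (Fin n) ℂ}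
    (hQ : IsCubeRootSeidel Q) {a b : Fin n} (hab : a ≠ b) : Q a b ∈ cubeRootsOfUnity := by
  simpa [cubeRootsOfUnity] using hQ.2.2 a b hab

lemma Finset.sum_sum_ite_and_eq {α β M : Type*} [DecidableEq α] [DecidableEq β]
    [AddCommMonoid M] (s : Finset α) (t : Finset β) (a : α) (b : β) (g : α → β → M) :
    ∑ x ∈ s, ∑ y ∈ t, (if a = x ∧ b = y then g x y else 0) =
      if a ∈ s ∧ b ∈ t then g a b else 0 := by
  simp_rw [ite_and, sum_ite_irrel, sum_const_zero, sum_ite_eq]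

section PathCount

variable {n : ℕ} {Q : Matrix (Fin n) (Fin n) ℂ} {i j : Fin n}

lemma sum_ite_eq_pathCount_mul (x y c : ℂ) :
    ∑ k, (if Q i k = x ∧ Q k j = y then c else 0) = (pathCount Q i j x y : ℂ) * c := by
  classical
  rw [← sum_filter, sum_const, nsmul_eq_mul, pathCount, Nat.card_eq_fintype_card,
    Fintype.card_subtype]
  push_cast
  rfl

lemma sum_apply_apply_eq_sum_pathCount {S : Finset ℂ} (hS0 : 0 ∉ S)
    (hdiag : ∀ k, Q k k = 0) (hS : ∀ a b, a ≠ b → Q a b ∈ S) (hij : i ≠ j)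
    (f : ℂ → ℂ → ℂ) :
    ∑ k, f (Q i k) (Q k j) =
      ∑ x ∈ S, ∑ y ∈ S, (pathCount Q i j x y : ℂ) * f x y + f 0 (Q i j) + f (Q i j) 0 := by
  classical
  have hk : ∀ k, f (Q i k) (Q k j) = ∑ x ∈ S, ∑ y ∈ S,
      (if Q i k = x ∧ Q k j = y then f x y else 0) +
        (if k = i then f 0 (Q i j) else 0) + (if k = j then f (Q i j) 0 else 0) := by
    intro k
    rw [sum_sum_ite_and_eq]
    by_cases hki : k = i
    · subst hki
      simp [hij, hdiag, hS0]
    by_cases hkj : k = j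
    · subst hkj
      simp [hki, hdiag, hS0]
    simp [hki, hkj, hS i k (Ne.symm hki), hS k j hkj]
  rw [sum_congr rfl fun k _ => hk k, sum_add_distrib, sum_add_distrib, sum_ite_eq',
    sum_ite_eq', sum_comm]
  simp only [mem_univ, if_true]
  congr 2
  refine sum_congr rfl fun x _ => ?_
  rw [sum_comm]
  exact sum_congr rfl fun y _ => sum_ite_eq_pathCount_mul x y (f x y)

end PathCount

open scoped Matrix

section SeidelEquation

variable {n : ℕ} {Q : Matrix (Fin n) (Fin n) ℂ} {c μ : ℂ}

lemma sum_mul_apply_of_sq_eq (heq : Q ^ 2 = c • 1 + μ • Q) {a b : Fin n} (hab : a ≠ b) :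
    ∑ k, Q a k * Q k b = μ * Q a b := by
  simpa [sq, Matrix.mul_apply, Matrix.one_apply_ne hab] using congrFun (congrFun heq a) b

lemma IsStandardForm.transpose (hsf : IsStandardForm Q) : IsStandardForm Qᵀ :=
  fun a b hab h => hsf b a hab.symm h.symm

lemma IsStandardForm.sum_row_eq (hsf : IsStandardForm Q) (hdiag : ∀ k, Q k k = 0)
    (heq : Q ^ 2 = c • 1 + μ • Q) {i : Fin n} (hi : i.val ≠ 0) : ∑ k, Q i k = μ + 1 := by
  set z : Fin n := ⟨0, i.pos⟩
  have hiz : i ≠ z := fun h => hi (by rw [h])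
  have hQiz : Q i z = 1 := hsf i z hiz (Or.inr rfl)
  have hcol : ∀ k ∈ univ.erase z, Q k z = 1 := fun k hk => hsf k z (ne_of_mem_erase hk) (Or.inr rfl)
  have h := sum_mul_apply_of_sq_eq heq hiz
  rw [← add_sum_erase _ _ (mem_univ z), hdiag, sum_congr rfl fun k hk => by rw [hcol k hk, mul_one],
    hQiz] at h
  rw [← add_sum_erase _ _ (mem_univ z), hQiz]
  linear_combination h

lemma IsStandardForm.sum_col_eq (hsf : IsStandardForm Q) (hdiag : ∀ k, Q k k = 0)
    (heq : Q ^ 2 = c • 1 + μ • Q) {j : Fin n} (hj : j.val ≠ 0) : ∑ k, Q k j = μ + 1 :=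
  hsf.transpose.sum_row_eq hdiag (Q := Qᵀ) (c := c) (by rw [← Matrix.transpose_pow, heq]; simp) hj

end SeidelEquation

theorem cubeRootSeidel_omega_entry_equations
    (n : ℕ) (Q : Matrix (Fin n) (Fin n) ℂ) (μ : ℝ)
    (hQ : IsCubeRootSeidel Q) (hsf : IsStandardForm Q)
    (heq : Q ^ 2 = ((n : ℂ) - 1) • (1 : Matrix (Fin n) (Fin n) ℂ) + (μ : ℂ) • Q)
    (i j : Fin n) (hij : i ≠ j) (hi : i.val ≠ 0) (hj : j.val ≠ 0)
    (hω : Q i j = ω3) :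
    pathCount Q i j ω3 (ω3 ^ 2) - pathCount Q i j 1 ω3 = -(2 * μ + 1) / 3 ∧
    pathCount Q i j ω3 ω3 - pathCount Q i j 1 1 = -(2 * μ + 4) / 3 ∧
    pathCount Q i j ω3 1 + pathCount Q i j 1 ω3 + pathCount Q i j 1 1 = (n : ℝ) / 3 + μ ∧
    pathCount Q i j (ω3 ^ 2) (ω3 ^ 2) - pathCount Q i j 1 1 = -(μ + 2) / 3 ∧
    pathCount Q i j (ω3 ^ 2) ω3 + pathCount Q i j 1 ω3 + pathCount Q i j 1 1
      = ((n : ℝ) + μ - 1) / 3 ∧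
    pathCount Q i j (ω3 ^ 2) 1 - pathCount Q i j 1 ω3 = (1 - μ) / 3 ∧
    pathCount Q i j 1 (ω3 ^ 2) + pathCount Q i j 1 ω3 + pathCount Q i j 1 1
      = ((n : ℝ) + 2 * μ + 1) / 3 := by
  have expand := sum_apply_apply_eq_sum_pathCount zero_notMem_cubeRootsOfUnity hQ.2.1
    (fun _ _ => hQ.apply_mem_cubeRootsOfUnity) hij
  have hcard := expand fun _ _ => 1
  have hrow := expand fun x _ => x
  have hcol := expand fun _ y => y
  have hprod := expand fun x y => x * y
  rw [sum_const, card_univ, Fintype.card_fin, nsmul_one] at hcard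
  rw [hsf.sum_row_eq hQ.2.1 heq hi] at hrow
  rw [hsf.sum_col_eq hQ.2.1 heq hj] at hcol
  rw [sum_mul_apply_of_sq_eq heq hij, hω] at hprod
  simp only [sum_cubeRootsOfUnity, hω] at hcard hrow hcol hprod
  set N := pathCount Q i j
  obtain ⟨e₁, -⟩ := eq_of_ofReal_add_mul_ω3_add_mul_ω3_sq_eq_zero
    (p := N 1 1 + N 1 ω3 + N 1 (ω3 ^ 2) + N ω3 1 + N ω3 ω3 + N ω3 (ω3 ^ 2) + N (ω3 ^ 2) 1
      + N (ω3 ^ 2) ω3 + N (ω3 ^ 2) (ω3 ^ 2) - n + 2) (q := 0) (r := 0)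
    (by push_cast; linear_combination -hcard)
  obtain ⟨e₂, e₃⟩ := eq_of_ofReal_add_mul_ω3_add_mul_ω3_sq_eq_zero
    (p := N 1 1 + N 1 ω3 + N 1 (ω3 ^ 2) - μ - 1) (q := N ω3 1 + N ω3 ω3 + N ω3 (ω3 ^ 2) + 1)
    (r := N (ω3 ^ 2) 1 + N (ω3 ^ 2) ω3 + N (ω3 ^ 2) (ω3 ^ 2))
    (by push_cast; linear_combination -hrow)
  obtain ⟨e₄, e₅⟩ := eq_of_ofReal_add_mul_ω3_add_mul_ω3_sq_eq_zero
    (p := N 1 1 + N ω3 1 + N (ω3 ^ 2) 1 - μ - 1) (q := N 1 ω3 + N ω3 ω3 + N (ω3 ^ 2) ω3 + 1)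
    (r := N 1 (ω3 ^ 2) + N ω3 (ω3 ^ 2) + N (ω3 ^ 2) (ω3 ^ 2))
    (by push_cast; linear_combination -hcol)
  obtain ⟨e₆, e₇⟩ := eq_of_ofReal_add_mul_ω3_add_mul_ω3_sq_eq_zero
    (p := N 1 1 + N ω3 (ω3 ^ 2) + N (ω3 ^ 2) ω3) (q := N 1 ω3 + N ω3 1 + N (ω3 ^ 2) (ω3 ^ 2) - μ)
    (r := N 1 (ω3 ^ 2) + N ω3 ω3 + N (ω3 ^ 2) 1)
    (by push_cast; linear_combination -hprod - (N ω3 (ω3 ^ 2) + N (ω3 ^ 2) ω3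
      + N (ω3 ^ 2) (ω3 ^ 2) * ω3) * ω3_pow_three)
  refine ⟨?_, ?_, ?_, ?_, ?_, ?_, ?_⟩ <;> linarith
end

section
/- Let ω = (−1 + i√3)/2 and let Q be an n×n nontrivial cube root Seidel matrix in standard form satisfying Q² = (n−1)·I + μ·Q for a real number μ, and set e = (n − μ − 2)/3. Then for every row index i different from the first, the number of column indices j different from the first and from i with Q_{ij} = 1 equals n − 2 − 2e, and this number is at least n/9 (i.e., 9·(n − 2 − 2e) ≥ n); in particular, every row other than the first contains at least one off-diagonal entry equal to 1 outside the first column. -/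
/-- Nontrivial: some off-diagonal entry is not equal to 1. -/
def IsNontrivial {n : ℕ} (Q : Matrix (Fin n) (Fin n) ℂ) : Prop :=
  ∃ i j : Fin n, i ≠ j ∧ Q i j ≠ 1


/-!
Evaluating `Q² = (n - 1) I + μ Q` at the entry `(i, 0)`, where the first column consists of ones,
shows that the entries of row `i` off the diagonal and off the first column sum to `μ`. If `a`, `b`,
`c` of them equal `1`, `ω`, `ω²`, comparing imaginary and real parts gives `b = c` and `a - b = μ`,
while `a + 2b = n - 2`.

For the bound, the eigenvalues of `Q` are the roots `r > 0 > s` of `x² - μ x - (n - 1)`, and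
`tr Q = 0` gives `m r + m' s = 0` for their multiplicities. Unless `m = m'` (and then `μ = 0`), this
makes `r` rational, hence an integer dividing `n - 1`; the cases `r = 1`, `r = 2`, `r ≥ 3` then
give `n ≤ 9a`.
-/

open Finset Polynomial Matrix

lemma ω3_eq_mk : ω3 = ⟨-1 / 2, √3 / 2⟩ := by
  apply Complex.ext <;> simp [ω3]

lemma ω3_sq_eq_mk : ω3 ^ 2 = ⟨-1 / 2, -(√3 / 2)⟩ := by
  rw [ω3_eq_mk, sq]
  apply Complex.ext <;> simp <;> ring_nf; norm_num

lemma ω3_ne_one : ω3 ≠ 1 := by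
  simp [ω3_eq_mk, Complex.ext_iff]

lemma ω3_sq_ne_one : ω3 ^ 2 ≠ 1 := by
  simp [ω3_sq_eq_mk, Complex.ext_iff]

lemma ω3_ne_ω3_sq : ω3 ≠ ω3 ^ 2 := by
  rw [ω3_sq_eq_mk, ω3_eq_mk]
  simp only [ne_eq, Complex.mk.injEq, true_and]
  linarith [Real.sqrt_pos.2 (show (0 : ℝ) < 3 by norm_num)]

lemma eq_and_sub_eq_of_add_mul_ω3_add_mul_ω3_sq_eq {a b c : ℕ} {μ : ℝ}
    (h : a + b * ω3 + c * ω3 ^ 2 = μ) : b = c ∧ (a : ℝ) - b = μ := by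
  rw [ω3_sq_eq_mk, ω3_eq_mk, Complex.ext_iff] at h
  simp only [Complex.add_re, Complex.add_im, Complex.mul_re, Complex.mul_im, Complex.natCast_re,
    Complex.natCast_im, Complex.ofReal_re, Complex.ofReal_im, zero_mul, sub_zero, mul_neg, neg_zero,
    add_zero, zero_add] at h
  have hbc : (b : ℝ) = c := by
    have := Real.sqrt_pos.2 (show (0 : ℝ) < 3 by norm_num)
    nlinarith [h.2]
  exact ⟨by exact_mod_cast hbc, by linarith [h.1]⟩

section CubeRootCounts

variable {ι : Type*} {S : Finset ι} {f : ι → ℂ}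

lemma mapsTo_cubeRoots (hf : ∀ j ∈ S, f j = 1 ∨ f j = ω3 ∨ f j = ω3 ^ 2) :
    Set.MapsTo f S ({1, ω3, ω3 ^ 2} : Finset ℂ) :=
  fun j hj => by simpa using hf j hj

lemma sum_eq_of_cubeRoots (hf : ∀ j ∈ S, f j = 1 ∨ f j = ω3 ∨ f j = ω3 ^ 2) :
    ∑ j ∈ S, f j = #{j ∈ S | f j = 1} + #{j ∈ S | f j = ω3} * ω3
      + #{j ∈ S | f j = ω3 ^ 2} * ω3 ^ 2 := by
  rw [← sum_fiberwise_of_maps_to (mapsTo_cubeRoots hf)]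
  rw [sum_insert (by simp [ω3_ne_one.symm, ω3_sq_ne_one.symm]),
    sum_insert (by simp [ω3_ne_ω3_sq]), sum_singleton]
  simp only [sum_eq_card_nsmul fun j hj => (mem_filter.1 hj).2, nsmul_eq_mul, mul_one, add_assoc]

lemma card_eq_of_cubeRoots (hf : ∀ j ∈ S, f j = 1 ∨ f j = ω3 ∨ f j = ω3 ^ 2) :
    #S = #{j ∈ S | f j = 1} + #{j ∈ S | f j = ω3} + #{j ∈ S | f j = ω3 ^ 2} := by
  rw [card_eq_sum_card_fiberwise (mapsTo_cubeRoots hf),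
    sum_insert (by simp [ω3_ne_one.symm, ω3_sq_ne_one.symm]),
    sum_insert (by simp [ω3_ne_ω3_sq]), sum_singleton, add_assoc]

end CubeRootCounts

lemma exists_intCast_eq_of_sq_eq {q : ℚ} {b c : ℤ} (h : q ^ 2 = b * q + c) : ∃ k : ℤ, q = k := by
  obtain ⟨k, hk, -⟩ := exists_integer_of_is_root_of_monic (p := X ^ 2 - C b * X - C c)
    (by monicity!) (r := q) (by simp [h])
  exact ⟨k, by simpa using hk⟩

lemma exists_intCast_eq_of_card_mul_add_card_mul_eq_zero {m m' : ℕ} {r s : ℝ} {z c : ℤ}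
    (hmm : m ≠ m') (hsum : r + s = z) (hprod : r * s = -c) (hmult : m * r + m' * s = 0) :
    ∃ k : ℤ, r = k := by
  have hden : (m' : ℚ) - m ≠ 0 := sub_ne_zero.2 (by exact_mod_cast hmm.symm)
  set q : ℚ := m' * z / (m' - m)
  have hq : (q : ℝ) = r := by
    have hden' : (m' : ℝ) - m ≠ 0 := by exact_mod_cast hden
    simp only [q]; push_cast
    rw [div_eq_iff hden']
    linear_combination hmult - (m' : ℝ) * hsum
  have hroot : q ^ 2 = z * q + c := by
    have : (q : ℝ) ^ 2 = z * q + c := by rw [hq]; linear_combination r * hsum - hprod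
    exact_mod_cast this
  obtain ⟨k, hk⟩ := exists_intCast_eq_of_sq_eq hroot
  exact ⟨k, by rw [← hq, hk, Rat.cast_intCast]⟩

lemma le_nine_mul_of_int_roots {a b m m' n : ℕ} {P R : ℤ} (hn : a + 2 * b + 2 = n) (h3 : 3 ≤ n)
    (hP : 0 < P) (hsum : P - R = a - b) (hprod : P * R = n - 1) (hcard : m + m' = n)
    (hmult : m * P = m' * R) : n ≤ 9 * a := by
  have hR : 0 < R := pos_of_mul_pos_right (by omega : 0 < P * R) hP.le
  rcases lt_trichotomy P 2 with hP1 | rfl | hP3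
  · obtain rfl : P = 1 := by omega
    omega
  · have hcard' : (m : ℤ) + m' = n := by exact_mod_cast hcard
    have hdvd : R + 2 ∣ 6 := ⟨m - 2 * R + 3, by linear_combination -hmult - R * hcard' + R * hprod⟩
    have := Int.le_of_dvd (by norm_num) hdvd
    omega
  · have : 0 ≤ (P - 3) * R := mul_nonneg (by omega) hR.le
    have : (n : ℤ) ≤ 9 * a := by nlinarith
    omega

namespace Matrix.IsHermitian

variable {ι 𝕜 : Type*} [Fintype ι] [DecidableEq ι] [RCLike 𝕜] {A : Matrix ι ι 𝕜}

lemma eigenvalues_sq_eq (hA : A.IsHermitian) {c μ : ℝ}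
    (h : A ^ 2 = (c : 𝕜) • (1 : Matrix ι ι 𝕜) + (μ : 𝕜) • A) (k : ι) :
    hA.eigenvalues k ^ 2 = c + μ * hA.eigenvalues k := by
  set v := ⇑(hA.eigenvectorBasis k)
  have hv : A *ᵥ v = (hA.eigenvalues k : 𝕜) • v := by
    rw [hA.mulVec_eigenvectorBasis k, RCLike.real_smul_eq_coe_smul (K := 𝕜)]
  have hv0 : v ≠ 0 := (WithLp.ofLp_eq_zero 2).ne.2 (hA.eigenvectorBasis.orthonormal.ne_zero k)
  have key : ((hA.eigenvalues k : 𝕜) ^ 2) • v = ((c : 𝕜) + μ * hA.eigenvalues k) • v := by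
    calc ((hA.eigenvalues k : 𝕜) ^ 2) • v = (A ^ 2) *ᵥ v := by
          rw [sq A, ← mulVec_mulVec, hv, mulVec_smul, hv, smul_smul, sq]
      _ = _ := by rw [h, add_mulVec, smul_mulVec, smul_mulVec, one_mulVec, hv, smul_smul, add_smul]
  exact_mod_cast smul_left_injective 𝕜 hv0 key

lemma exists_two_eigenvalues_of_sq_eq (hA : A.IsHermitian) (htr : A.trace = 0) {c μ : ℝ}
    (hc : 0 ≤ c) (h : A ^ 2 = (c : 𝕜) • (1 : Matrix ι ι 𝕜) + (μ : 𝕜) • A) :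
    ∃ (m m' : ℕ) (r s : ℝ), s ≤ r ∧ r + s = μ ∧ r * s = -c ∧
      m + m' = Fintype.card ι ∧ m * r + m' * s = 0 := by
  set d := √(μ ^ 2 + 4 * c)
  have hd : d ^ 2 = μ ^ 2 + 4 * c := Real.sq_sqrt (by positivity)
  set r := (μ + d) / 2
  set s := (μ - d) / 2
  have hroots : ∀ k, hA.eigenvalues k = r ∨ hA.eigenvalues k = s := by
    intro k
    have := hA.eigenvalues_sq_eq h k
    have : (hA.eigenvalues k - r) * (hA.eigenvalues k - s) = 0 := by
      simp only [r, s]; linear_combination this - hd / 4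
    exact (mul_eq_zero.1 this).imp sub_eq_zero.1 sub_eq_zero.1
  refine ⟨#{k | hA.eigenvalues k = r}, #{k | hA.eigenvalues k ≠ r}, r, s,
    by simp only [r, s]; linarith [Real.sqrt_nonneg (μ ^ 2 + 4 * c)], by ring,
    by simp only [r, s]; linear_combination -hd / 4,
    card_filter_add_card_filter_not _, ?_⟩
  have hsum : ∑ k, hA.eigenvalues k = 0 := by
    exact_mod_cast hA.trace_eq_sum_eigenvalues.symm.trans htr
  rw [← hsum, ← sum_filter_add_sum_filter_not univ (fun k => hA.eigenvalues k = r)]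
  rw [sum_congr rfl fun k hk => (mem_filter.1 hk).2, sum_congr rfl fun k hk =>
    (hroots k).resolve_left (mem_filter.1 hk).2]
  simp only [sum_const, nsmul_eq_mul]

end Matrix.IsHermitian

lemma le_nine_mul_of_roots {a b m m' n : ℕ} {r s : ℝ} (hn : a + 2 * b + 2 = n) (h3 : 3 ≤ n)
    (hsr : s ≤ r) (hsum : r + s = (a - b : ℤ)) (hprod : r * s = -(n - 1 : ℤ))
    (hcard : m + m' = n) (hmult : m * r + m' * s = 0) : n ≤ 9 * a := by
  by_cases hmm : m = m'
  · subst hmm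
    have hm : (m : ℝ) ≠ 0 := by exact_mod_cast (by omega : m ≠ 0)
    have hz : ((a - b : ℤ) : ℝ) = 0 := by
      rw [← hsum]
      exact (mul_eq_zero.1 (by linear_combination hmult)).resolve_left hm
    have : (a : ℤ) = b := sub_eq_zero.1 (by exact_mod_cast hz)
    omega
  obtain ⟨P, rfl⟩ := exists_intCast_eq_of_card_mul_add_card_mul_eq_zero hmm hsum hprod hmult
  obtain rfl : s = ((a - b - P : ℤ) : ℝ) := by push_cast at hsum ⊢; linarith
  have hprod' : P * (P - (a - b)) = (n - 1 : ℤ) := by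
    have : (P : ℝ) * (P - (a - b)) = (n - 1 : ℤ) := by push_cast at hprod ⊢; linarith
    exact_mod_cast this
  have hmult' : (m * P : ℤ) = m' * (P - (a - b)) := by
    have : (m * P : ℝ) = m' * (P - (a - b)) := by push_cast at hmult ⊢; linarith
    exact_mod_cast this
  have hP : 0 < P := by
    have hneg : (P : ℝ) * ((a - b - P : ℤ) : ℝ) < 0 := by
      rw [hprod]; push_cast; linarith [show (3 : ℝ) ≤ n by exact_mod_cast h3]
    have : (0 : ℝ) < P := by nlinarith
    exact_mod_cast this
  exact le_nine_mul_of_int_roots hn h3 hP (by ring) hprod' hcard hmult'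

section Rows

variable {n : ℕ} {Q : Matrix (Fin n) (Fin n) ℂ}

def offRow (i : Fin n) : Finset (Fin n) := {j | j.val ≠ 0 ∧ j ≠ i}

lemma card_offRow {i : Fin n} (hi : i.val ≠ 0) : #(offRow i) + 2 = n := by
  have : offRow i = univ \ {⟨0, i.pos⟩, i} := by
    ext j; simp [offRow, Fin.ext_iff]
  rw [this, card_sdiff_of_subset (subset_univ _), card_univ, Fintype.card_fin,
    card_pair (by simpa [Fin.ext_iff] using (Ne.symm hi))]
  have := i.isLt
  omega

lemma sum_offRow_eq {μ : ℝ} (hQ : IsCubeRootSeidel Q) (hsf : IsStandardForm Q)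
    (heq : Q ^ 2 = ((n : ℂ) - 1) • (1 : Matrix (Fin n) (Fin n) ℂ) + (μ : ℂ) • Q)
    {i : Fin n} (hi : i.val ≠ 0) : ∑ j ∈ offRow i, Q i j = μ := by
  set o : Fin n := ⟨0, i.pos⟩
  have hio : i ≠ o := fun h => hi (by rw [h])
  have h := congr_fun₂ heq i o
  rw [sq, mul_apply] at h
  simp only [Matrix.add_apply, Matrix.smul_apply, one_apply_ne hio, hsf i o hio (.inr rfl),
    smul_eq_mul, mul_zero, mul_one, zero_add] at h
  rw [← h, offRow, sum_filter]
  refine sum_congr rfl fun j _ => ?_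
  by_cases hj : j.val ≠ 0 ∧ j ≠ i
  · rw [if_pos hj, hsf j o (fun h => hj.1 (by rw [h])) (.inr rfl), mul_one]
  · rw [if_neg hj]
    by_cases hjo : j.val = 0
    · rw [show j = o from Fin.ext hjo, hQ.2.1, mul_zero]
    · rw [show j = i by tauto, hQ.2.1, zero_mul]

lemma cubeRoots_offRow (hQ : IsCubeRootSeidel Q) (i : Fin n) :
    ∀ j ∈ offRow i, Q i j = 1 ∨ Q i j = ω3 ∨ Q i j = ω3 ^ 2 :=
  fun j hj => hQ.2.2 i j (mem_filter.1 hj).2.2.symm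

end Rows

lemma IsNontrivial.three_le {n : ℕ} {Q : Matrix (Fin n) (Fin n) ℂ} (hnt : IsNontrivial Q)
    (hsf : IsStandardForm Q) : 3 ≤ n := by
  obtain ⟨i, j, hij, hne⟩ := hnt
  have hi : i.val ≠ 0 := fun h => hne (hsf i j hij (.inl h))
  have hj : j.val ≠ 0 := fun h => hne (hsf i j hij (.inr h))
  have := Fin.val_ne_of_ne hij
  omega

lemma card_filter_offRow_of_sq_eq {n : ℕ} {Q : Matrix (Fin n) (Fin n) ℂ} {μ : ℝ}
    (hQ : IsCubeRootSeidel Q) (hsf : IsStandardForm Q)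
    (heq : Q ^ 2 = ((n : ℂ) - 1) • (1 : Matrix (Fin n) (Fin n) ℂ) + (μ : ℂ) • Q)
    {i : Fin n} (hi : i.val ≠ 0) :
    #{j ∈ offRow i | Q i j = 1} + 2 * #{j ∈ offRow i | Q i j = ω3} + 2 = n ∧
      (#{j ∈ offRow i | Q i j = 1} : ℝ) - #{j ∈ offRow i | Q i j = ω3} = μ := by
  have hsum := sum_offRow_eq hQ hsf heq hi
  rw [sum_eq_of_cubeRoots (cubeRoots_offRow hQ i)] at hsum
  obtain ⟨hbc, hab⟩ := eq_and_sub_eq_of_add_mul_ω3_add_mul_ω3_sq_eq hsum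
  refine ⟨?_, hab⟩
  have := card_eq_of_cubeRoots (cubeRoots_offRow hQ i)
  have := card_offRow hi
  omega

theorem cubeRootSeidel_ones_in_each_row
    (n : ℕ) (Q : Matrix (Fin n) (Fin n) ℂ) (μ : ℝ)
    (hQ : IsCubeRootSeidel Q) (hsf : IsStandardForm Q) (hnt : IsNontrivial Q)
    (heq : Q ^ 2 = ((n : ℂ) - 1) • (1 : Matrix (Fin n) (Fin n) ℂ) + (μ : ℂ) • Q) (e : ℝ) (he : e = ((n : ℝ) - μ - 2) / 3) :
    ∀ i : Fin n, i.val ≠ 0 →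
      (Nat.card {j : Fin n // j.val ≠ 0 ∧ j ≠ i ∧ Q i j = 1} : ℝ)
        = (n : ℝ) - 2 - 2 * e ∧
      9 * ((n : ℝ) - 2 - 2 * e) ≥ (n : ℝ) ∧
      ∃ j : Fin n, j.val ≠ 0 ∧ j ≠ i ∧ Q i j = 1 := by
  intro i hi
  have h3 := hnt.three_le hsf
  obtain ⟨hn, hμ⟩ := card_filter_offRow_of_sq_eq hQ hsf heq hi
  set a := #{j ∈ offRow i | Q i j = 1}
  set b := #{j ∈ offRow i | Q i j = ω3}
  have hcard : Nat.card {j : Fin n // j.val ≠ 0 ∧ j ≠ i ∧ Q i j = 1} = a := by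
    rw [Nat.card_eq_fintype_card, Fintype.card_subtype]
    simp only [a, offRow, filter_filter, and_assoc]
  have ha : (n : ℝ) - 2 - 2 * e = a := by
    rw [he, ← hμ, ← hn]; push_cast; ring
  obtain ⟨m, m', r, s, hsr, hrs, hprod, hmm, hmult⟩ :=
    hQ.1.exists_two_eigenvalues_of_sq_eq (by simp [trace, hQ.2.1])
      (c := n - 1) (sub_nonneg.2 (Nat.one_le_cast.2 (by omega)))
      (by simpa using heq)
  have h9 : n ≤ 9 * a := le_nine_mul_of_roots hn h3 hsr
    (by push_cast; linarith) (by push_cast; linarith) (by simpa using hmm) hmult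
  refine ⟨by rw [hcard, ha], by rw [ha]; exact_mod_cast h9, ?_⟩
  obtain ⟨j, hj⟩ := card_pos.1 (show 0 < a by omega)
  exact ⟨j, by simpa [offRow, and_assoc] using hj⟩
end
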